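/- With the notation of the flow completion construction, the translation flow (t,(s,x)) ↦ (s+t, x) on ℝ × M maps trajectories of X̄ = ∂_s × X to trajectories of X̄, and therefore descends to a well-defined global flow on the orbit space M_ℝ. -/

import Mathlib

open scoped Manifold Topology
open Set Filter Topology

/-- The integral-curve predicate with its older meaning (derivative `HasMFDerivAt`, not within `s`). -/
def IsIntegralCurveOnOld {E : Type*} [NormedAddCommGroup E] [NormedSpace ℝ E]
    {H : Type*} [TopologicalSpace H] {I : ModelWithCorners ℝ E H}
    {M : Type*} [TopologicalSpace M] [ChartedSpace H M]
    (γ : ℝ → M) (v : (x : M) → TangentSpace I x) (s : Set ℝ) : Prop :=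
  ∀ t ∈ s, HasMFDerivAt 𝓘(ℝ, ℝ) I γ t ((1 : ℝ →L[ℝ] ℝ).smulRight <| v (γ t))

/-- A maximal local flow of a vector field `v` on a manifold `M`. -/
structure MaxLocalFlow {E : Type*} [NormedAddCommGroup E] [NormedSpace ℝ E]
    {H : Type*} [TopologicalSpace H] (I : ModelWithCorners ℝ E H)
    (M : Type*) [TopologicalSpace M] [ChartedSpace H M]
    (v : (x : M) → TangentSpace I x) where
  domain : Set (ℝ × M)
  toFun : ℝ → M → M
  isOpen_domain : IsOpen domain
  zero_mem : ∀ x : M, ((0 : ℝ), x) ∈ domain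
  map_zero : ∀ x : M, toFun 0 x = x
  continuousOn : ContinuousOn (fun p : ℝ × M => toFun p.1 p.2) domain
  segment_mem : ∀ (x : M) (t : ℝ), (t, x) ∈ domain → ∀ u ∈ Set.uIcc 0 t, (u, x) ∈ domain
  isIntegralCurveOn : ∀ x : M,
    IsIntegralCurveOnOld (fun t => toFun t x) v {t | (t, x) ∈ domain}
  map_add : ∀ (x : M) (s t : ℝ), (s, x) ∈ domain → (t, toFun s x) ∈ domain →
    (s + t, x) ∈ domain ∧ toFun (s + t) x = toFun t (toFun s x)
  map_neg : ∀ (x : M) (t : ℝ), (t, x) ∈ domain →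
    (-t, toFun t x) ∈ domain ∧ toFun (-t) (toFun t x) = x
  maximal : ∀ (x : M) (γ : ℝ → M) (a b : ℝ), a < 0 → 0 < b → γ 0 = x →
    IsIntegralCurveOnOld γ v (Set.Ioo a b) →
    ∀ t ∈ Set.Ioo a b, (t, x) ∈ domain ∧ toFun t x = γ t

/-- The vector field `X̄ = ∂ₛ × X` on `ℝ × M`. -/
def barField {E : Type*} [NormedAddCommGroup E] [NormedSpace ℝ E]
    {H : Type*} [TopologicalSpace H] {I : ModelWithCorners ℝ E H}
    {M : Type*} [TopologicalSpace M] [ChartedSpace H M]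
    (v : (x : M) → TangentSpace I x) :
    (p : ℝ × M) → TangentSpace ((𝓘(ℝ, ℝ)).prod I) p :=
  fun p => ((1 : ℝ), v p.2)

/-- The orbit relation of a (local) flow: `p ~ q` iff the flow carries `p` to `q`. -/
def MaxLocalFlow.rel {E : Type*} [NormedAddCommGroup E] [NormedSpace ℝ E]
    {H : Type*} [TopologicalSpace H] {I : ModelWithCorners ℝ E H}
    {M : Type*} [TopologicalSpace M] [ChartedSpace H M]
    {v : (x : M) → TangentSpace I x} (Φ : MaxLocalFlow I M v) : M → M → Prop :=
  fun p q => ∃ t : ℝ, (t, p) ∈ Φ.domain ∧ Φ.toFun t p = q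


/-- Auxiliary: translating the first (time) coordinate maps integral curves of `barField v`
to integral curves of `barField v`. -/
lemma translate_isIntegralCurveOn {E : Type*} [NormedAddCommGroup E] [NormedSpace ℝ E]
    {H : Type*} [TopologicalSpace H] {I : ModelWithCorners ℝ E H}
    {M : Type*} [TopologicalSpace M] [ChartedSpace H M]
    (v : (x : M) → TangentSpace I x) (t : ℝ) (γ : ℝ → ℝ × M) (s : Set ℝ)
    (h : IsIntegralCurveOnOld γ (barField v) s) :
    IsIntegralCurveOnOld (fun u => (((γ u).1 + t, (γ u).2) : ℝ × M)) (barField v) s := by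
  intro u hu
  have hγ := h u hu
  set D : ℝ →L[ℝ] (ℝ × E) := (1 : ℝ →L[ℝ] ℝ).smulRight (barField v (γ u)) with hD
  have h1 : HasMFDerivAt 𝓘(ℝ, ℝ) 𝓘(ℝ, ℝ) (fun u => (γ u).1 + t) u
      ((ContinuousLinearMap.fst ℝ ℝ E).comp D) := by
    have h1' : HasMFDerivAt (𝓘(ℝ, ℝ).prod I) 𝓘(ℝ, ℝ) Prod.fst (γ u)
        (ContinuousLinearMap.fst ℝ ℝ E) := hasMFDerivAt_fst (γ u)
    have h1'' := h1'.comp u hγ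
    have h1f := h1''.hasFDerivAt
    exact (h1f.add_const t).hasMFDerivAt
  have h2 : HasMFDerivAt 𝓘(ℝ, ℝ) I (fun u => (γ u).2) u
      ((ContinuousLinearMap.snd ℝ ℝ E).comp D) :=
    (hasMFDerivAt_snd (γ u)).comp u hγ
  have key : HasMFDerivAt 𝓘(ℝ, ℝ) (𝓘(ℝ, ℝ).prod I)
      (fun u => (((γ u).1 + t, (γ u).2) : ℝ × M)) u
      (((ContinuousLinearMap.fst ℝ ℝ E).comp D).prod
        ((ContinuousLinearMap.snd ℝ ℝ E).comp D)) := by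
    have h3 := h1.mdifferentiableAt.prodMk h2.mdifferentiableAt
    have h4 := h3.hasMFDerivAt
    rwa [h1.mdifferentiableAt.mfderiv_prod h2.mdifferentiableAt, h1.mfderiv, h2.mfderiv] at h4
  exact key

/-- Auxiliary: an open interval slightly larger than a closed interval lies in its thickening. -/
lemma Ioo_subset_thickening_Icc {c d δ : ℝ} (hcd : c ≤ d) (hδ : 0 < δ) :
    Set.Ioo (c - δ) (d + δ) ⊆ Metric.thickening δ (Set.Icc c d) := by
  intro x hx
  rw [Metric.mem_thickening_iff]
  refine ⟨max c (min x d), ⟨le_max_left _ _, max_le hcd (min_le_right _ _)⟩, ?_⟩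
  rw [Real.dist_eq, abs_lt]
  obtain ⟨hx1, hx2⟩ := hx
  constructor <;> rcases le_total x d with h | h <;> rcases le_total c x with h' | h' <;>
    simp only [min_def, max_def] <;> split_ifs <;> linarith

/-- The translation flow `τ_t (s, x) = (s + t, x)` on `ℝ × M` maps trajectories of
`X̄ = ∂ₛ × X` to trajectories of `X̄` (it commutes with the local flow of `X̄`), and
hence descends to a well-defined global flow on the orbit space `M_ℝ = (ℝ × M)/X̄`. -/
theorem translation_flow_descends {E : Type*} [NormedAddCommGroup E] [NormedSpace ℝ E]
    {H : Type*} [TopologicalSpace H] {I : ModelWithCorners ℝ E H}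
    {M : Type*} [TopologicalSpace M] [ChartedSpace H M] [IsManifold I ((⊤ : ℕ∞) : WithTop ℕ∞) M]
    (v : (x : M) → TangentSpace I x)
    (Φ : MaxLocalFlow ((𝓘(ℝ, ℝ)).prod I) (ℝ × M) (barField v)) :
    (∀ (t u : ℝ) (p : ℝ × M), (u, p) ∈ Φ.domain →
      (u, ((p.1 + t, p.2) : ℝ × M)) ∈ Φ.domain ∧
      Φ.toFun u ((p.1 + t, p.2) : ℝ × M)
        = (((Φ.toFun u p).1 + t, (Φ.toFun u p).2) : ℝ × M)) ∧
    ∃! T : ℝ → Quot Φ.rel → Quot Φ.rel,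
      (∀ p : ℝ × M, ∀ t : ℝ, T t (Quot.mk Φ.rel p) = Quot.mk Φ.rel ((p.1 + t, p.2) : ℝ × M)) := by
  have main : ∀ (t u : ℝ) (p : ℝ × M), (u, p) ∈ Φ.domain →
      (u, ((p.1 + t, p.2) : ℝ × M)) ∈ Φ.domain ∧
      Φ.toFun u ((p.1 + t, p.2) : ℝ × M)
        = (((Φ.toFun u p).1 + t, (Φ.toFun u p).2) : ℝ × M) := by
    intro t u p hup
    set S : Set ℝ := {w | (w, p) ∈ Φ.domain} with hS
    have hSopen : IsOpen S :=
      Φ.isOpen_domain.preimage (continuous_id.prodMk continuous_const)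
    have hsub : Set.uIcc 0 u ⊆ S := fun w hw => Φ.segment_mem p u hup w hw
    obtain ⟨δ, hδ, hth⟩ := isCompact_uIcc.exists_thickening_subset_open hSopen hsub
    have hIoo : Set.Ioo (min 0 u - δ) (max 0 u + δ) ⊆ S := by
      refine (Ioo_subset_thickening_Icc min_le_max hδ).trans ?_
      have h0 : Set.Icc (min 0 u) (max 0 u) = Set.uIcc (0 : ℝ) u := rfl
      rw [h0]; exact hth
    have ha : min 0 u - δ < 0 := by
      have := min_le_left (0 : ℝ) u; linarith
    have hb : (0 : ℝ) < max 0 u + δ := by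
      have := le_max_left (0 : ℝ) u; linarith
    have hu' : u ∈ Set.Ioo (min 0 u - δ) (max 0 u + δ) := by
      constructor
      · have := min_le_right (0 : ℝ) u; linarith
      · have := le_max_right (0 : ℝ) u; linarith
    have hic : IsIntegralCurveOnOld
        (fun w => (((Φ.toFun w p).1 + t, (Φ.toFun w p).2) : ℝ × M)) (barField v)
        (Set.Ioo (min 0 u - δ) (max 0 u + δ)) :=
      fun w hw => translate_isIntegralCurveOn v t _ S (Φ.isIntegralCurveOn p) w (hIoo hw)
    exact Φ.maximal ((p.1 + t, p.2) : ℝ × M)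
      (fun w => (((Φ.toFun w p).1 + t, (Φ.toFun w p).2) : ℝ × M))
      _ _ ha hb (by simp [Φ.map_zero]) hic u hu'
  refine ⟨main, ?_⟩
  have hrel : ∀ t : ℝ, ∀ p q : ℝ × M, Φ.rel p q →
      Φ.rel ((p.1 + t, p.2) : ℝ × M) ((q.1 + t, q.2) : ℝ × M) := by
    rintro t p q ⟨s, hs, rfl⟩
    exact ⟨s, (main t s p hs).1, (main t s p hs).2⟩
  refine ⟨fun t => Quot.map (fun p : ℝ × M => ((p.1 + t, p.2) : ℝ × M)) (hrel t),
    fun p t => rfl, ?_⟩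
  intro T' hT'
  funext t q
  induction q using Quot.ind with
  | _ p => rw [hT' p t]; rfl
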